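/- Very strong extractors yield deterministic entropy condensers: if δ ∈ [0,1] and g : {0,1}^n × [D] → {0,1}^m is a very strong δ-extractor for a family F, then for every μ ∈ F, H(g(X,1),…,g(X,D)) ≥ D·m − D·m·δ − D·sqrt(4·log₂e·m·δ) for X ∼ μ; i.e., x ↦ (g(x,1),…,g(x,D)) is an entropy condenser of entropy rate at least 1 − δ − sqrt(4·log₂e·δ/m). -/

import Mathlib

/-!
By the chain rule, `H(g(X,1),…,g(X,D))` is the sum over `s` of the conditional entropies of
`g(X,s)` given the earlier outputs. Each of these is bounded below linearly in the `ℓ¹`-distance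
`d` of the conditional law from uniform: a distribution `ν` on a set of size `N` satisfies
`H(ν) ≥ log N - (log N + log e) · d / 2`, because on `[0, 1]` the function `t ↦ t log (N t)` lies
below `max 0 ℓ`, where `ℓ` is the line of slope `log N + log e` through `(1/N, 0)`. Averaging over
`s` and the prefix gives `H ≥ D m - (m + log e) δ D`. This is at least the claimed bound when
`log e · δ ≤ sqrt (4 log e · m δ)`; otherwise `m = 0` or `δ ≥ 1`, and the claimed bound is `≤ 0`.
-/


open Finset

/-- `μ` is a probability distribution on the finite type `A`. -/
def IsDist {A : Type*} [Fintype A] (μ : A → ℝ) : Prop :=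
  (∀ a, 0 ≤ μ a) ∧ ∑ a, μ a = 1

open Classical in
/-- Probability of an event under a distribution on a finite type. -/
noncomputable def Pr {A : Type*} [Fintype A] (μ : A → ℝ) (p : A → Prop) : ℝ :=
  ∑ a, if p a then μ a else 0

/-- Base-2 Shannon entropy of the push-forward of `μ` under `f`. -/
noncomputable def pushH {Ω β : Type*} [Fintype Ω] [Fintype β]
    (μ : Ω → ℝ) (f : Ω → β) : ℝ :=
  ∑ b, Pr μ (fun x => f x = b) * Real.logb 2 (Pr μ (fun x => f x = b))⁻¹

/-- The "very strong extractor" error of `g : Ω × [D] → {0,1}^r` on `μ`: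
`E_{T uniform, Z∼μ} ‖ν^μ_{T, g(Z,1),…,g(Z,T−1)} − U‖₁`, where
`ν^μ_{s,y₁,…,y_{s−1}}` is the conditional distribution of `g(X,s)` given
`g(X,t) = y_t` for all `t < s`. -/
noncomputable def vsErr {Ω : Type*} [Fintype Ω] {D r : ℕ}
    (μ : Ω → ℝ) (g : Ω → Fin D → (Fin r → Bool)) : ℝ :=
  (D : ℝ)⁻¹ * ∑ s : Fin D, ∑ z, μ z *
    ∑ y : Fin r → Bool,
      |Pr μ (fun x => g x s = y ∧ ∀ t, t < s → g x t = g z t)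
          / Pr μ (fun x => ∀ t, t < s → g x t = g z t)
        - ((2 : ℝ) ^ r)⁻¹|

open Real

lemma mul_log_sub_self_le_of_le {u t : ℝ} (hu : 0 < u) (hut : u ≤ t) (ht : t ≤ 1) :
    t * log t - t ≤ u * log u - u := by
  have ht0 : 0 < t := hu.trans_le hut
  have hlog : u - t ≤ u * (log u - log t) := by
    have := one_sub_inv_le_log_of_pos (div_pos hu ht0)
    rw [log_div hu.ne' ht0.ne', inv_div] at this
    calc u - t = u * (1 - t / u) := by field_simp
      _ ≤ u * (log u - log t) := mul_le_mul_of_nonneg_left this hu.le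
  have hneg : (t - u) * log t ≤ 0 :=
    mul_nonpos_of_nonneg_of_nonpos (by linarith) (log_nonpos ht0.le ht)
  linarith

lemma mul_log_div_le {u t : ℝ} (hu : 0 < u) (ht0 : 0 ≤ t) (ht1 : t ≤ 1) :
    t * log (t / u) ≤ (1 - log u) * ((|t - u| + (t - u)) / 2) := by
  rcases le_or_gt t u with htu | hut
  · rw [abs_of_nonpos (by linarith), neg_add_cancel, zero_div, mul_zero]
    exact mul_nonpos_of_nonneg_of_nonpos ht0
      (log_nonpos (div_nonneg ht0 hu.le) ((div_le_one hu).2 htu))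
  · rw [abs_of_pos (by linarith), log_div (by linarith) hu.ne']
    linarith [mul_log_sub_self_le_of_le hu hut.le ht1]

lemma logb_card_sub_le_sum_mul_logb_inv {γ : Type*} [Fintype γ] [Nonempty γ] (ν : γ → ℝ)
    (hν0 : ∀ c, 0 ≤ ν c) (hν1 : ∑ c, ν c = 1) :
    logb 2 (Fintype.card γ) - (logb 2 (Fintype.card γ) + logb 2 (exp 1)) / 2
        * ∑ c, |ν c - (Fintype.card γ : ℝ)⁻¹|
      ≤ ∑ c, ν c * logb 2 (ν c)⁻¹ := by
  set N : ℝ := (Fintype.card γ : ℝ)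
  have hN : 0 < N := by positivity
  have hpt : ∀ c, ν c * log (ν c / N⁻¹) ≤ (1 - log N⁻¹) * ((|ν c - N⁻¹| + (ν c - N⁻¹)) / 2) :=
    fun c => mul_log_div_le (inv_pos.2 hN) (hν0 c)
      (hν1 ▸ single_le_sum (fun c _ => hν0 c) (mem_univ c))
  have hdev : ∑ c, (ν c - N⁻¹) = 0 := by
    simp [sum_sub_distrib, hν1, N, hN.ne']
  have hterm : ∀ c, ν c * logb 2 (ν c)⁻¹ = (ν c * log N - ν c * log (ν c / N⁻¹)) / log 2 := by
    intro c
    rcases (hν0 c).eq_or_lt with h | h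
    · simp [← h]
    · rw [logb, div_inv_eq_mul, log_mul h.ne' hN.ne', log_inv]
      ring
  have hsum := sum_le_sum fun c (_ : c ∈ univ) => hpt c
  rw [← mul_sum, ← sum_div, sum_add_distrib, hdev, add_zero, log_inv] at hsum
  rw [sum_congr rfl fun c _ => hterm c, ← sum_div, sum_sub_distrib, ← sum_mul, hν1, one_mul,
    logb, logb, log_exp, le_div_iff₀ (log_pos one_lt_two)]
  generalize ∑ c, |ν c - N⁻¹| = S at hsum ⊢
  have hlhs : (log N / log 2 - (log N / log 2 + 1 / log 2) / 2 * S) * log 2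
      = log N - (1 + log N) / 2 * S := by
    field_simp [(log_pos one_lt_two).ne']
    ring
  linarith

lemma le_sum_mul_logb_div {γ : Type*} [Fintype γ] [Nonempty γ] (J : γ → ℝ) (hJ : ∀ c, 0 ≤ J c) :
    (∑ c, J c) * (logb 2 (Fintype.card γ) - (logb 2 (Fintype.card γ) + logb 2 (exp 1)) / 2
        * ∑ c, |J c / ∑ c', J c' - (Fintype.card γ : ℝ)⁻¹|)
      ≤ ∑ c, J c * logb 2 ((∑ c', J c') / J c) := by
  rcases (sum_nonneg fun c _ => hJ c : 0 ≤ ∑ c, J c).eq_or_lt with hP | hP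
  · have hJ0 := (sum_eq_zero_iff_of_nonneg fun c _ => hJ c).1 hP.symm
    simp [hJ0]
  · set P := ∑ c, J c
    have key := logb_card_sub_le_sum_mul_logb_inv (fun c => J c / P)
      (fun c => div_nonneg (hJ c) hP.le) (by rw [← sum_div, div_self hP.ne'])
    calc _ ≤ P * ∑ c, J c / P * logb 2 (J c / P)⁻¹ := mul_le_mul_of_nonneg_left key hP.le
      _ = _ := by
        rw [mul_sum]
        refine sum_congr rfl fun c _ => ?_
        rw [inv_div]
        field_simp [hP.ne']

section Entropy

variable {Ω β β' γ : Type*} [Fintype Ω] [Fintype β] [Fintype β'] [Fintype γ]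

/-- The expected `ℓ¹`-distance from uniform of the law of `h` given `F`; with `F` the first `s`
outputs of `g` and `h = g(·, s)` this is the inner expectation in `vsErr`. -/
noncomputable def condUnifErr (μ : Ω → ℝ) (F : Ω → β) (h : Ω → γ) : ℝ :=
  ∑ z, μ z * ∑ c, |Pr μ (fun x => h x = c ∧ F x = F z) / Pr μ (F · = F z)
    - (Fintype.card γ : ℝ)⁻¹|

variable {μ : Ω → ℝ}

lemma Pr_congr {p q : Ω → Prop} (h : ∀ x, p x ↔ q x) : Pr μ p = Pr μ q :=
  congrArg (Pr μ) (funext fun x => propext (h x))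

lemma Pr_nonneg (hμ : ∀ x, 0 ≤ μ x) (p : Ω → Prop) : 0 ≤ Pr μ p :=
  sum_nonneg fun x _ => by split_ifs; exacts [hμ x, le_rfl]

lemma Pr_le_one (hμ : IsDist μ) (p : Ω → Prop) : Pr μ p ≤ 1 :=
  hμ.2 ▸ sum_le_sum fun x _ => by split_ifs; exacts [le_rfl, hμ.1 x]

lemma le_Pr (hμ : ∀ x, 0 ≤ μ x) {p : Ω → Prop} {x : Ω} (hx : p x) : μ x ≤ Pr μ p := by
  unfold Pr
  refine le_trans ?_ (single_le_sum (fun a _ => ?_) (mem_univ x))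
  · rw [if_pos hx]
  · split_ifs; exacts [hμ a, le_rfl]

lemma sum_mul_comp_eq_sum_Pr (F : Ω → β) (A : β → ℝ) :
    ∑ x, μ x * A (F x) = ∑ b, Pr μ (F · = b) * A b := by
  classical
  simp only [Pr, sum_mul, ite_mul, zero_mul]
  rw [sum_comm]
  simp

lemma Pr_eq_sum_Pr_and {α : Type*} (F : Ω → α) (h : Ω → γ) (b : α) :
    Pr μ (F · = b) = ∑ c, Pr μ (fun x => h x = c ∧ F x = b) := by
  classical
  simp only [Pr]
  rw [sum_comm]
  refine sum_congr rfl fun x _ => ?_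
  by_cases hF : F x = b <;> simp [hF]

lemma sum_Pr_eq_one (hμ : IsDist μ) (F : Ω → β) : ∑ b, Pr μ (F · = b) = 1 := by
  simpa [hμ.2] using (sum_mul_comp_eq_sum_Pr (μ := μ) F fun _ => 1).symm

lemma pushH_eq_sum (f : Ω → β) : pushH μ f = ∑ x, μ x * logb 2 (Pr μ (f · = f x))⁻¹ :=
  (sum_mul_comp_eq_sum_Pr f fun b => logb 2 (Pr μ (f · = b))⁻¹).symm

lemma pushH_congr {f : Ω → β} {f' : Ω → β'} (h : ∀ x y, f x = f y ↔ f' x = f' y) :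
    pushH μ f = pushH μ f' := by
  rw [pushH_eq_sum, pushH_eq_sum]
  exact sum_congr rfl fun x _ => by rw [Pr_congr fun y => h y x]

lemma pushH_nonneg (hμ : IsDist μ) (f : Ω → β) : 0 ≤ pushH μ f := by
  rw [pushH_eq_sum]
  refine sum_nonneg fun x _ => mul_nonneg (hμ.1 x) ?_
  rw [logb_inv, neg_nonneg]
  exact logb_nonpos one_lt_two (Pr_nonneg hμ.1 _) (Pr_le_one hμ _)

lemma pushH_prod_eq (hμ : ∀ x, 0 ≤ μ x) (F : Ω → β) (h : Ω → γ) :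
    pushH μ (fun x => (F x, h x)) = pushH μ F + ∑ x, μ x *
      logb 2 (Pr μ (F · = F x) / Pr μ (fun y => h y = h x ∧ F y = F x)) := by
  simp only [pushH_eq_sum, Prod.mk.injEq, ← sum_add_distrib, ← mul_add]
  refine sum_congr rfl fun x _ => ?_
  rcases (hμ x).eq_or_lt with h0 | h0
  · simp [← h0]
  have hJ : 0 < Pr μ (fun y => h y = h x ∧ F y = F x) := h0.trans_le (le_Pr hμ ⟨rfl, rfl⟩)
  have hP : 0 < Pr μ (F · = F x) := h0.trans_le (le_Pr hμ rfl)
  rw [Pr_congr fun y => and_comm, logb_div hP.ne' hJ.ne', logb_inv, logb_inv]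
  ring

lemma le_pushH_prod [Nonempty γ] (hμ : IsDist μ) (F : Ω → β) (h : Ω → γ) :
    pushH μ F + logb 2 (Fintype.card γ)
        - (logb 2 (Fintype.card γ) + logb 2 (exp 1)) / 2 * condUnifErr μ F h
      ≤ pushH μ (fun x => (F x, h x)) := by
  set J : β → γ → ℝ := fun b c => Pr μ (fun x => h x = c ∧ F x = b)
  set A : β → ℝ := fun b => ∑ c, |J b c / Pr μ (F · = b) - (Fintype.card γ : ℝ)⁻¹|
  have hregroup : ∑ x, μ x * logb 2 (Pr μ (F · = F x) / J (F x) (h x))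
      = ∑ b, ∑ c, J b c * logb 2 (Pr μ (F · = b) / J b c) := by
    rw [sum_mul_comp_eq_sum_Pr (fun x => (F x, h x))
      (fun p => logb 2 (Pr μ (F · = p.1) / J p.1 p.2)), Fintype.sum_prod_type]
    simp only [Prod.mk.injEq, J]
    congr! 4
    exact funext fun _ => propext and_comm
  have hfiber : ∀ b, Pr μ (F · = b) * (logb 2 (Fintype.card γ)
      - (logb 2 (Fintype.card γ) + logb 2 (exp 1)) / 2 * A b)
        ≤ ∑ c, J b c * logb 2 (Pr μ (F · = b) / J b c) := fun b => by
    simp only [A, Pr_eq_sum_Pr_and F h b]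
    exact le_sum_mul_logb_div _ fun c => Pr_nonneg hμ.1 _
  have herr : condUnifErr μ F h = ∑ b, Pr μ (F · = b) * A b := sum_mul_comp_eq_sum_Pr F A
  rw [pushH_prod_eq hμ.1, hregroup, herr]
  have := sum_le_sum fun b (_ : b ∈ univ) => hfiber b
  simp only [mul_sub, sum_sub_distrib, ← sum_mul, sum_Pr_eq_one hμ, one_mul] at this
  rw [mul_sum]
  simp only [mul_left_comm _ (Pr μ _)] at this ⊢
  linarith

end Entropy

section Prefix

variable {Ω γ : Type*} {D : ℕ}

def prefixMap (g : Ω → Fin D → γ) (k : ℕ) (x : Ω) : {t : Fin D // (t : ℕ) < k} → γ :=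
  fun t => g x t

lemma prefixMap_eq_iff {g : Ω → Fin D → γ} {k : ℕ} {x y : Ω} :
    prefixMap g k x = prefixMap g k y ↔ ∀ t : Fin D, (t : ℕ) < k → g x t = g y t := by
  simp [prefixMap, funext_iff]

lemma prefixMap_succ_eq_iff {g : Ω → Fin D → γ} (s : Fin D) {x y : Ω} :
    prefixMap g (s + 1) x = prefixMap g (s + 1) y
      ↔ (prefixMap g s x, g x s) = (prefixMap g s y, g y s) := by
  simp only [prefixMap_eq_iff, Prod.mk.injEq, Nat.lt_succ_iff_lt_or_eq, or_imp, forall_and,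
    Fin.val_inj, forall_eq]

lemma prefixMap_length_eq_iff {g : Ω → Fin D → γ} {x y : Ω} :
    prefixMap g D x = prefixMap g D y ↔ g x = g y := by
  rw [prefixMap_eq_iff, funext_iff]
  exact forall_congr' fun t => imp_iff_right t.is_lt

variable [Fintype Ω] [Fintype γ] {μ : Ω → ℝ}

lemma le_pushH_of_sum_condUnifErr [Nonempty γ] (hμ : IsDist μ) (g : Ω → Fin D → γ) :
    D * logb 2 (Fintype.card γ) - (logb 2 (Fintype.card γ) + logb 2 (exp 1)) / 2
        * ∑ s : Fin D, condUnifErr μ (prefixMap g s) (g · s)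
      ≤ pushH μ g := by
  set a : ℕ → ℝ := fun k => pushH μ (prefixMap g k)
  have hstep : ∀ s : Fin D, logb 2 (Fintype.card γ) - (logb 2 (Fintype.card γ)
      + logb 2 (exp 1)) / 2 * condUnifErr μ (prefixMap g s) (g · s) ≤ a (s + 1) - a s := by
    intro s
    have := le_pushH_prod hμ (prefixMap g s) (g · s)
    rw [← pushH_congr fun x y => prefixMap_succ_eq_iff s] at this
    linarith
  have htel : ∑ s : Fin D, (a (s + 1) - a s) = a D - a 0 := by
    rw [Fin.sum_univ_eq_sum_range (fun k => a (k + 1) - a k), sum_range_sub]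
  have hD : a D = pushH μ g := pushH_congr fun _ _ => prefixMap_length_eq_iff
  have h0 : 0 ≤ a 0 := pushH_nonneg hμ _
  have := sum_le_sum fun s (_ : s ∈ univ) => hstep s
  rw [htel, sum_sub_distrib, sum_const, card_univ, Fintype.card_fin, nsmul_eq_mul,
    ← mul_sum] at this
  linarith

end Prefix

lemma natCast_mul_vsErr {Ω : Type*} [Fintype Ω] {D r : ℕ} (μ : Ω → ℝ)
    (g : Ω → Fin D → (Fin r → Bool)) :
    D * vsErr μ g = ∑ s : Fin D, condUnifErr μ (prefixMap g s) (g · s) := by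
  rcases eq_or_ne D 0 with rfl | hD
  · simp
  rw [vsErr, ← mul_assoc, mul_inv_cancel₀ (Nat.cast_ne_zero.2 hD), one_mul]
  simp only [condUnifErr, prefixMap_eq_iff, Fintype.card_fun, Fintype.card_bool,
    Fintype.card_fin, Nat.cast_pow, Nat.cast_ofNat, Fin.lt_def]

lemma le_pushH_of_vsErr {Ω : Type*} [Fintype Ω] {D m : ℕ} {μ : Ω → ℝ} (hμ : IsDist μ)
    (g : Ω → Fin D → (Fin m → Bool)) :
    D * m - (m + logb 2 (exp 1)) / 2 * (D * vsErr μ g) ≤ pushH μ g := by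
  have hcard : logb 2 (Fintype.card (Fin m → Bool)) = m := by
    simp [logb_pow]
  simpa only [natCast_mul_vsErr, hcard] using le_pushH_of_sum_condUnifErr hμ g

lemma sub_sub_sqrt_le_max (m : ℕ) {L δ : ℝ} (hL0 : 0 ≤ L) (hL : L ≤ 4) :
    m - m * δ - √(4 * L * m * δ) ≤ max 0 (m - (m + L) * δ) := by
  by_cases h : L * δ ≤ √(4 * L * m * δ)
  · exact le_max_of_le_right (by linarith)
  rw [not_le] at h
  have hLδ : 0 < L * δ := (sqrt_nonneg _).trans_lt h
  have hsq : 4 * L * m * δ < (L * δ) ^ 2 := (sqrt_lt' hLδ).1 h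
  have hm : 4 * m < L * δ := by nlinarith
  refine le_max_of_le_left ?_
  rcases m.eq_zero_or_pos with rfl | hm1
  · simp
  have hm1' : (1 : ℝ) ≤ m := by exact_mod_cast hm1
  have hδ : 1 ≤ δ := by nlinarith
  nlinarith [sqrt_nonneg (4 * L * m * δ)]

lemma logb_two_exp_one_le_four : logb 2 (exp 1) ≤ 4 := by
  rw [logb, log_exp, div_le_iff₀ (log_pos one_lt_two)]
  linarith [log_two_gt_d9]

theorem very_strong_extractor_to_condenser_general {n m D : ℕ} (δ : ℝ)
    (F : Set ((Fin n → Bool) → ℝ)) (hF : ∀ μ ∈ F, IsDist μ)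
    (g : (Fin n → Bool) → Fin D → (Fin m → Bool))
    (hvs : ∀ μ ∈ F, vsErr μ g ≤ 2 * δ) :
    ∀ μ ∈ F,
      (D : ℝ) * m - D * m * δ - D * Real.sqrt (4 * Real.logb 2 (Real.exp 1) * m * δ)
        ≤ pushH μ g := by
  intro μ hμF
  have hL0 : 0 ≤ logb 2 (exp 1) := logb_nonneg one_lt_two (one_le_exp zero_le_one)
  have hlin : D * (m - (m + logb 2 (exp 1)) * δ) ≤ pushH μ g := by
    have := mul_le_mul_of_nonneg_left (hvs μ hμF)
      (by positivity : (0 : ℝ) ≤ (m + logb 2 (exp 1)) / 2 * D)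
    linarith [le_pushH_of_vsErr (hF μ hμF) g]
  calc (D : ℝ) * m - D * m * δ - D * √(4 * logb 2 (exp 1) * m * δ)
      = D * (m - m * δ - √(4 * logb 2 (exp 1) * m * δ)) := by ring
    _ ≤ D * max 0 (m - (m + logb 2 (exp 1)) * δ) :=
      mul_le_mul_of_nonneg_left (sub_sub_sqrt_le_max m hL0 logb_two_exp_one_le_four) D.cast_nonneg
    _ ≤ pushH μ g := by
      rw [mul_max_of_nonneg _ _ D.cast_nonneg, mul_zero]
      exact max_le (pushH_nonneg (hF μ hμF) g) hlin

/-- Very strong extractors yield deterministic entropy condensers: if `g` is a very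
strong `δ`-extractor for `F` (error at most `2δ` on every `μ ∈ F`), then
`H(g(X,1),…,g(X,D)) ≥ D·m − D·m·δ − D·sqrt(4·log₂e·m·δ)` for `X ∼ μ`, every `μ ∈ F`. -/
theorem very_strong_extractor_to_condenser {n m D : ℕ} (hD : 0 < D)
    (δ : ℝ) (hδ0 : 0 ≤ δ) (hδ1 : δ ≤ 1)
    (F : Set ((Fin n → Bool) → ℝ)) (hF : ∀ μ ∈ F, IsDist μ)
    (g : (Fin n → Bool) → Fin D → (Fin m → Bool))
    (hvs : ∀ μ ∈ F, vsErr μ g ≤ 2 * δ) :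
    ∀ μ ∈ F,
      (D : ℝ) * m - D * m * δ - D * Real.sqrt (4 * Real.logb 2 (Real.exp 1) * m * δ)
        ≤ pushH μ g :=
  very_strong_extractor_to_condenser_general δ F hF g hvs
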